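/- Let Z = (X, A, Y) ~ P with A ∈ {0,1}, π_a(x) = P(A = a | X = x) > 0, η_a(y|x) the conditional density of Y given X = x, A = a, and p_a(y) = ∫ η_a(y|x) dP(x). Let h be twice continuously differentiable and define φ(Z; P̄) = [1{A=a}/π̄_a(X)]·{h'(p̄_a(Y)) - ∫ h'(p̄_a(y)) η̄_a(y|X) dy} + ∫ h'(p̄_a(y)) η̄_a(y|X) dy - ∫∫ h'(p̄_a(y)) η̄_a(y|x) dy dP̄(x), where barred quantities come from another distribution P̄ with p̄_a(y) = ∫ η̄_a(y|x) dP̄(x). Then E_P[φ(Z; P̄)] = ∫∫ h'(p̄_a(y)) [π_a(x)/π̄_a(x) - 1][η_a(y|x) - η̄_a(y|x)] dy dP(x) + ∫ h'(p̄_a(y)) [p_a(y) - p̄_a(y)] dy. -/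

import Mathlib

open MeasureTheory

/-- The mean under P of the influence-function candidate φ(Z;P̄)
(written via iterated expectation over X and Y) equals the doubly-robust remainder
plus the linear density term. Here P is the marginal of X, π/π̄ are propensities,
η/η̄ conditional densities of Y given X (and A = a), p/p̄ the induced marginal
counterfactual densities. -/
theorem statement10
    {𝒳 : Type*} [MeasurableSpace 𝒳]
    (P Pb : Measure 𝒳) [IsProbabilityMeasure P] [IsProbabilityMeasure Pb]
    (π πb : 𝒳 → ℝ) (η ηb : 𝒳 → ℝ → ℝ)
    (hπ : ∀ x, 0 < π x) (ε : ℝ) (hε : 0 < ε) (hπb : ∀ x, ε ≤ πb x)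
    (hη0 : ∀ x y, 0 ≤ η x y) (hηb0 : ∀ x y, 0 ≤ ηb x y)
    (hη1 : ∀ x, ∫ y, η x y = 1) (hηb1 : ∀ x, ∫ y, ηb x y = 1)
    (h : ℝ → ℝ) (hh : ContDiff ℝ 2 h)
    (p pb : ℝ → ℝ)
    (hpdef : ∀ y, p y = ∫ x, η x y ∂P)
    (hpbdef : ∀ y, pb y = ∫ x, ηb x y ∂Pb)
    (hint1 : Integrable (fun q : 𝒳 × ℝ => deriv h (pb q.2) * η q.1 q.2)
      (P.prod volume))
    (hint2 : Integrable (fun q : 𝒳 × ℝ => deriv h (pb q.2) * ηb q.1 q.2)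
      (P.prod volume))
    (hint3 : Integrable (fun q : 𝒳 × ℝ => deriv h (pb q.2) * ηb q.1 q.2)
      (Pb.prod volume))
    (hintφ : Integrable (fun x =>
      (π x / πb x) * ((∫ y, deriv h (pb y) * η x y) - ∫ y, deriv h (pb y) * ηb x y)) P) :
    (∫ x, ((π x / πb x) *
          ((∫ y, deriv h (pb y) * η x y) - ∫ y, deriv h (pb y) * ηb x y)
        + (∫ y, deriv h (pb y) * ηb x y)
        - ∫ x', (∫ y, deriv h (pb y) * ηb x' y) ∂Pb) ∂P)
      = (∫ x, (∫ y, deriv h (pb y) * (π x / πb x - 1) * (η x y - ηb x y)) ∂P)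
        + ∫ y, deriv h (pb y) * (p y - pb y) := by
  -- abbreviations (as plain facts)
  have hAint : Integrable (fun x => ∫ y, deriv h (pb y) * η x y) P :=
    hint1.integral_prod_left
  have hBint : Integrable (fun x => ∫ y, deriv h (pb y) * ηb x y) P :=
    hint2.integral_prod_left
  have hae1 : ∀ᵐ x ∂P, Integrable (fun y => deriv h (pb y) * η x y) volume :=
    hint1.prod_right_ae
  have hae2 : ∀ᵐ x ∂P, Integrable (fun y => deriv h (pb y) * ηb x y) volume :=
    hint2.prod_right_ae
  -- Fubini for the P-term
  have hswap1 : ∫ x, (∫ y, deriv h (pb y) * η x y) ∂P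
      = ∫ y, ∫ x, deriv h (pb y) * η x y ∂P :=
    integral_integral_swap (f := fun x y => deriv h (pb y) * η x y) hint1
  have hswap3 : ∫ x, (∫ y, deriv h (pb y) * ηb x y) ∂Pb
      = ∫ y, ∫ x, deriv h (pb y) * ηb x y ∂Pb :=
    integral_integral_swap (f := fun x y => deriv h (pb y) * ηb x y) hint3
  have hgp : (fun y => deriv h (pb y) * p y)
      = fun y => ∫ x, deriv h (pb y) * η x y ∂P := by
    funext y; rw [integral_const_mul _ _, hpdef]
  have hgpb : (fun y => deriv h (pb y) * pb y)
      = fun y => ∫ x, deriv h (pb y) * ηb x y ∂Pb := by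
    funext y; rw [integral_const_mul _ _, hpbdef]
  have hgpInt : Integrable (fun y => deriv h (pb y) * p y) volume := by
    rw [hgp]; exact hint1.integral_prod_right
  have hgpbInt : Integrable (fun y => deriv h (pb y) * pb y) volume := by
    rw [hgpb]; exact hint3.integral_prod_right
  have hP1 : ∫ y, deriv h (pb y) * p y = ∫ x, (∫ y, deriv h (pb y) * η x y) ∂P := by
    rw [hgp, ← hswap1]
  have hP2 : ∫ y, deriv h (pb y) * pb y = ∫ x, (∫ y, deriv h (pb y) * ηb x y) ∂Pb := by
    rw [hgpb, ← hswap3]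
  -- second summand on the RHS
  have hsecond : (∫ y, deriv h (pb y) * (p y - pb y))
      = (∫ x, (∫ y, deriv h (pb y) * η x y) ∂P)
        - ∫ x, (∫ y, deriv h (pb y) * ηb x y) ∂Pb := by
    have e : (fun y => deriv h (pb y) * (p y - pb y))
        = fun y => deriv h (pb y) * p y - deriv h (pb y) * pb y := by
      funext y; ring
    rw [e, integral_sub hgpInt hgpbInt, hP1, hP2]
  -- first summand on the RHS
  have hfirst : (∫ x, (∫ y, deriv h (pb y) * (π x / πb x - 1) * (η x y - ηb x y)) ∂P)
      = ∫ x, ((π x / πb x - 1) *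
          ((∫ y, deriv h (pb y) * η x y) - ∫ y, deriv h (pb y) * ηb x y)) ∂P := by
    refine integral_congr_ae ?_
    filter_upwards [hae1, hae2] with x h1 h2
    have e : (fun y => deriv h (pb y) * (π x / πb x - 1) * (η x y - ηb x y))
        = fun y => (π x / πb x - 1) *
            (deriv h (pb y) * η x y - deriv h (pb y) * ηb x y) := by
      funext y; ring
    rw [e, integral_const_mul _ _, integral_sub h1 h2]
  have hfirst2 : (∫ x, ((π x / πb x - 1) *
          ((∫ y, deriv h (pb y) * η x y) - ∫ y, deriv h (pb y) * ηb x y)) ∂P)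
      = (∫ x, ((π x / πb x) *
          ((∫ y, deriv h (pb y) * η x y) - ∫ y, deriv h (pb y) * ηb x y)) ∂P)
        - ((∫ x, (∫ y, deriv h (pb y) * η x y) ∂P)
            - ∫ x, (∫ y, deriv h (pb y) * ηb x y) ∂P) := by
    have e : (fun x => (π x / πb x - 1) *
          ((∫ y, deriv h (pb y) * η x y) - ∫ y, deriv h (pb y) * ηb x y))
        = fun x => (π x / πb x) *
            ((∫ y, deriv h (pb y) * η x y) - ∫ y, deriv h (pb y) * ηb x y)
          - ((∫ y, deriv h (pb y) * η x y) - ∫ y, deriv h (pb y) * ηb x y) := by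
      funext x; ring
    have hABs : Integrable (fun x => (∫ y, deriv h (pb y) * η x y) - ∫ y, deriv h (pb y) * ηb x y) P := hAint.sub hBint
    rw [e, integral_sub hintφ hABs, integral_sub hAint hBint]
  -- the LHS
  have hLHS : (∫ x, ((π x / πb x) *
          ((∫ y, deriv h (pb y) * η x y) - ∫ y, deriv h (pb y) * ηb x y)
        + (∫ y, deriv h (pb y) * ηb x y)
        - ∫ x', (∫ y, deriv h (pb y) * ηb x' y) ∂Pb) ∂P)
      = (∫ x, ((π x / πb x) *
          ((∫ y, deriv h (pb y) * η x y) - ∫ y, deriv h (pb y) * ηb x y)) ∂P)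
        + (∫ x, (∫ y, deriv h (pb y) * ηb x y) ∂P)
        - ∫ x', (∫ y, deriv h (pb y) * ηb x' y) ∂Pb := by
    have hsum : Integrable (fun x => (π x / πb x) *
        ((∫ y, deriv h (pb y) * η x y) - ∫ y, deriv h (pb y) * ηb x y)
        + ∫ y, deriv h (pb y) * ηb x y) P := hintφ.add hBint
    rw [integral_sub hsum (integrable_const _), integral_add hintφ hBint,
      integral_const, probReal_univ, one_smul]
  rw [hLHS, hfirst, hfirst2, hsecond]
  ring
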